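/- For any prime p > 2 and integer k ≥ 2, the commutator width of a Sylow p-subgroup of the alternating group A_{p^k} equals 1. -/

import Mathlib

/-!
For odd `p` every `p`-subgroup of `Perm (Fin (p ^ k))` consists of even permutations, so a Sylow
`p`-subgroup of `A_{p^k}` is a Sylow `p`-subgroup of `S_{p^k}`, i.e. the iterated wreath product
`C_p ≀ ⋯ ≀ C_p`. Commutator width at most one passes from `D` to `D ≀ C_n`: an element of the
commutator subgroup has the form `(f, 1)`, and the ordered product `f(σ) f(σ²) ⋯ f(σⁿ)` lies in
`[D, D]`, so it is a single commutator `[α, β]`; then `(f, 1) = [(u, σ), (v, 1)]`, where `u` is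
supported at the identity and `v` is built from the inverse partial products of `f`. For `k ≥ 2`
the group `W_{k-1} ≀ C_p` is not abelian.
-/

open scoped commutatorElement

open Equiv Function Multiplicative

def CommutatorWidthLeOne (G : Type*) [Group G] : Prop :=
  ∀ g ∈ commutator G, ∃ a b : G, g = ⁅a, b⁆

section Transfer

variable {G H : Type*} [Group G] [Group H]

theorem commutator_map_of_surjective {f : G →* H} (hf : Surjective f) :
    (commutator G).map f = commutator H := by
  rw [commutator_def, commutator_def, Subgroup.map_commutator,
    Subgroup.map_top_of_surjective f hf]

theorem CommutatorWidthLeOne.of_surjective (hG : CommutatorWidthLeOne G) {f : G →* H}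
    (hf : Surjective f) : CommutatorWidthLeOne H := by
  intro g hg
  rw [← commutator_map_of_surjective hf] at hg
  obtain ⟨c, hc, rfl⟩ := hg
  obtain ⟨a, b, rfl⟩ := hG c hc
  exact ⟨f a, f b, map_commutatorElement f a b⟩

theorem MulEquiv.commutator_ne_bot (e : G ≃* H) (hG : commutator G ≠ ⊥) :
    commutator H ≠ ⊥ := by
  rwa [← commutator_map_of_surjective (f := e.toMonoidHom) e.surjective, ne_eq,
    Subgroup.map_eq_bot_iff_of_injective _ e.injective]

end Transfer

namespace RegularWreathProduct

variable {D Q : Type*} [Group D] [Group Q]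

theorem commutatorElement_mk_one (u v : Q → D) (q : Q) :
    ⁅(⟨u, q⟩ : D ≀ᵣ Q), (⟨v, 1⟩ : D ≀ᵣ Q)⁆ =
      ⟨fun t ↦ u t * v (q⁻¹ * t) * (u t)⁻¹ * (v t)⁻¹, 1⟩ := by
  ext t <;> simp [commutatorElement_def, mul_assoc]

instance [Nontrivial Q] : Nontrivial (D ≀ᵣ Q) :=
  Surjective.nontrivial (f := right) fun q ↦ ⟨⟨1, q⟩, rfl⟩

theorem commutator_ne_bot [Nontrivial D] [Nontrivial Q] : commutator (D ≀ᵣ Q) ≠ ⊥ := by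
  classical
  obtain ⟨d, hd⟩ := exists_ne (1 : D)
  obtain ⟨q, hq⟩ := exists_ne (1 : Q)
  have hne : ⁅(⟨1, q⟩ : D ≀ᵣ Q), (⟨Pi.mulSingle 1 d, 1⟩ : D ≀ᵣ Q)⁆ ≠ 1 := fun h ↦ by
    rw [commutatorElement_mk_one] at h
    have := congrFun (congrArg left h) q
    simp [hq] at this
    exact hd this
  intro h
  apply hne
  rw [← Subgroup.mem_bot, ← h]
  exact Subgroup.commutator_mem_commutator (Subgroup.mem_top _) (Subgroup.mem_top _)

def leftProdAbelianization [Fintype Q] : D ≀ᵣ Q →* Abelianization D where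
  toFun w := ∏ t, Abelianization.of (w.left t)
  map_one' := by simp
  map_mul' a b := by
    simp only [mul_left, Pi.mul_apply, map_mul, Finset.prod_mul_distrib]
    congr 1
    exact Fintype.prod_equiv (Equiv.mulLeft a.right⁻¹) _ _ fun _ ↦ rfl

end RegularWreathProduct

section Cyclic

variable {D : Type*} [Group D] {n : ℕ}

def cyclicPartialProd (f : Multiplicative (ZMod n) → D) (i : ℕ) : D :=
  ((List.range i).map fun j ↦ f (ofAdd ((j + 1 : ℕ) : ZMod n))).prod

@[simp]
theorem cyclicPartialProd_zero (f : Multiplicative (ZMod n) → D) : cyclicPartialProd f 0 = 1 :=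
  rfl

theorem cyclicPartialProd_succ (f : Multiplicative (ZMod n) → D) (i : ℕ) :
    cyclicPartialProd f (i + 1) = cyclicPartialProd f i * f (ofAdd ((i + 1 : ℕ) : ZMod n)) :=
  List.prod_range_succ _ i

theorem Abelianization.of_cyclicPartialProd_self [NeZero n] (f : Multiplicative (ZMod n) → D) :
    Abelianization.of (cyclicPartialProd f n) = ∏ t, Abelianization.of (f t) := by
  rw [cyclicPartialProd, map_list_prod, List.map_map]
  change ∏ j ∈ Finset.range n, Abelianization.of (f (ofAdd ((j + 1 : ℕ) : ZMod n))) = _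
  refine Finset.prod_nbij' (fun j ↦ ofAdd ((j + 1 : ℕ) : ZMod n)) (fun t ↦ (toAdd t - 1).val)
    (by simp) (fun t _ ↦ Finset.mem_range.2 (ZMod.val_lt _)) (fun j hj ↦ ?_) (fun t _ ↦ ?_)
    (fun _ _ ↦ rfl)
  · simp [ZMod.val_cast_of_lt (Finset.mem_range.1 hj)]
  · simp

theorem Multiplicative.ZMod.exists_eq_ofAdd_natCast_succ [NeZero n]
    {t : Multiplicative (ZMod n)} (ht : t ≠ 1) :
    ∃ i, i + 1 < n ∧ t = ofAdd ((i + 1 : ℕ) : ZMod n) := by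
  have h0 : (toAdd t).val ≠ 0 := fun h ↦ ht ((ZMod.val_eq_zero _).1 h)
  refine ⟨(toAdd t).val - 1, ?_, ?_⟩
  · have := ZMod.val_lt (toAdd t)
    omega
  · rw [Nat.sub_add_cancel (Nat.one_le_iff_ne_zero.2 h0), ZMod.natCast_zmod_val]
    rfl

namespace RegularWreathProduct

theorem exists_commutatorElement_eq_mk_one [NeZero n] (hD : CommutatorWidthLeOne D)
    (f : Multiplicative (ZMod n) → D) (hf : cyclicPartialProd f n ∈ commutator D) :
    ∃ x y : D ≀ᵣ Multiplicative (ZMod n), ⁅x, y⁆ = ⟨f, 1⟩ := by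
  classical
  obtain ⟨m, rfl⟩ : ∃ m, n = m + 1 := Nat.exists_eq_add_one.2 (Nat.pos_of_neZero n)
  obtain ⟨R, hR⟩ : ∃ R, cyclicPartialProd f m = R := ⟨_, rfl⟩
  obtain ⟨α, β, hαβ⟩ : ∃ α β, R * f 1 = ⁅α, β⁆ := by
    refine hD _ ?_
    rwa [cyclicPartialProd_succ, ZMod.natCast_self, hR] at hf
  refine ⟨⟨Pi.mulSingle 1 (R⁻¹ * α * R), ofAdd 1⟩,
    ⟨fun t ↦ (cyclicPartialProd f (toAdd t).val)⁻¹ * (β * R), 1⟩, ?_⟩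
  rw [commutatorElement_mk_one]
  congr 1
  funext t
  rcases eq_or_ne t 1 with rfl | ht
  · have hprev : (toAdd ((ofAdd 1)⁻¹ * 1 : Multiplicative (ZMod (m + 1)))).val = m := by
      simp [ZMod.val_neg_one]
    have hf1 : f 1 = R⁻¹ * ⁅α, β⁆ := by rw [← hαβ]; group
    simp only [Pi.mulSingle_eq_same, hprev, hR, toAdd_one, ZMod.val_zero, cyclicPartialProd_zero,
      hf1, commutatorElement_def]
    group
  · obtain ⟨i, hi, rfl⟩ := Multiplicative.ZMod.exists_eq_ofAdd_natCast_succ ht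
    have hprev : (toAdd ((ofAdd 1)⁻¹ * ofAdd ((i + 1 : ℕ) : ZMod (m + 1)))).val = i := by
      rw [← ZMod.val_cast_of_lt (Nat.lt_of_succ_lt hi)]
      simp
    simp only [Pi.mulSingle_eq_of_ne ht, hprev, toAdd_ofAdd, ZMod.val_cast_of_lt hi,
      cyclicPartialProd_succ]
    group

end RegularWreathProduct

theorem CommutatorWidthLeOne.regularWreathProduct [NeZero n] (hD : CommutatorWidthLeOne D) :
    CommutatorWidthLeOne (D ≀ᵣ Multiplicative (ZMod n)) := by
  intro w hw
  have hright : w.right = 1 := Abelianization.commutator_subset_ker RegularWreathProduct.rightHom hw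
  have hleft : cyclicPartialProd w.left n ∈ commutator D := by
    rw [← Abelianization.ker_of, MonoidHom.mem_ker, Abelianization.of_cyclicPartialProd_self]
    exact Abelianization.commutator_subset_ker RegularWreathProduct.leftProdAbelianization hw
  obtain ⟨x, y, hxy⟩ := RegularWreathProduct.exists_commutatorElement_eq_mk_one hD w.left hleft
  exact ⟨x, y, by rw [hxy, ← hright]⟩

end Cyclic

namespace IteratedWreathProduct

theorem commutatorWidthLeOne (n : ℕ) [NeZero n] :
    ∀ k, CommutatorWidthLeOne (IteratedWreathProduct (Multiplicative (ZMod n)) k)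
  | 0 => fun _ _ ↦ ⟨1, 1, rfl⟩
  | k + 1 => (commutatorWidthLeOne n k).regularWreathProduct

theorem commutator_ne_bot (G : Type*) [Group G] [Nontrivial G] {k : ℕ} (hk : 2 ≤ k) :
    commutator (IteratedWreathProduct G k) ≠ ⊥ := by
  obtain ⟨m, rfl⟩ := Nat.exists_eq_add_of_le' hk
  have : Nontrivial (IteratedWreathProduct G (m + 1)) :=
    inferInstanceAs (Nontrivial (IteratedWreathProduct G m ≀ᵣ G))
  exact RegularWreathProduct.commutator_ne_bot

end IteratedWreathProduct

section Alternating

variable {α : Type*} [Fintype α] [DecidableEq α] {p : ℕ} [Fact p.Prime]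

theorem IsPGroup.le_alternatingGroup (hp : p ≠ 2) {H : Subgroup (Perm α)} (hH : IsPGroup p H) :
    H ≤ alternatingGroup α := by
  intro g hg
  obtain ⟨m, hm⟩ := hH ⟨g, hg⟩
  have hgm : g ^ p ^ m = 1 := by simpa using congrArg Subtype.val hm
  rw [Perm.mem_alternatingGroup, ← orderOf_eq_one_iff]
  refine Nat.eq_one_of_dvd_coprimes (a := 2) (b := p ^ m) ?_
    (orderOf_dvd_of_pow_eq_one (Int.units_sq _)) (orderOf_dvd_of_pow_eq_one ?_)
  · exact ((Nat.coprime_primes Nat.prime_two Fact.out).2 hp.symm).pow_right m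
  · rw [← map_pow, hgm, map_one]

noncomputable def Sylow.mulEquivOfAlternatingGroup (hp : p ≠ 2) (P : Sylow p (alternatingGroup α))
    (Q : Sylow p (Perm α)) : P ≃* Q :=
  have hQ : (Q : Subgroup (Perm α)) ≤ alternatingGroup α := Q.isPGroup'.le_alternatingGroup hp
  (P.equiv (Q.subtype hQ)).trans (Subgroup.subgroupOfEquivOfLe hQ)

end Alternating

/-- for a prime `p > 2` and `k ≥ 2`, the commutator width of a Sylow
`p`-subgroup of the alternating group `A_{p^k}` equals `1`: every element of its
commutator subgroup is a single commutator, and the commutator subgroup is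
nontrivial. -/
theorem cw_sylow_alt_eq_one (p k : ℕ) [Fact p.Prime] (hp : 2 < p) (hk : 2 ≤ k)
    (P : Sylow p (alternatingGroup (Fin (p ^ k)))) :
    (∀ g ∈ commutator ↥P, ∃ a b : ↥P, g = ⁅a, b⁆) ∧ commutator ↥P ≠ ⊥ := by
  let e : P ≃* IteratedWreathProduct (Multiplicative (ZMod p)) k :=
    (P.mulEquivOfAlternatingGroup hp.ne' default).trans
      (Sylow.mulEquivIteratedWreathProduct p k _ (by simp) _ (by simp) _)
  exact ⟨(IteratedWreathProduct.commutatorWidthLeOne p k).of_surjective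
      (f := e.symm.toMonoidHom) e.symm.surjective,
    e.symm.commutator_ne_bot (IteratedWreathProduct.commutator_ne_bot _ hk)⟩
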